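/- Let 𝒳, 𝒴 be finite sets and 𝒟 ⊆ 𝒫(𝒳×𝒴) a closed convex set of joint distributions. Then min over q ∈ 𝒫(𝒴|𝒳) of max over p ∈ 𝒟 of E_p[−log q(Y|X)] equals max over p ∈ 𝒟 of min over q of E_p[−log q(Y|X)], and both equal max_{p ∈ 𝒟} H_p(Y|X). -/

import Mathlib

/-
Weak duality and Gibbs' inequality `H_p(Y|X) ≤ E_p[-log q(Y|X)]` give
`max_p H_p(Y|X) ≤ max_p min_q ≤ min_q max_p`, so the content is `min_q max_p ≤ max_p H_p(Y|X)`.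

If `p⋆` maximizes `H` over a convex set `C` of strictly positive distributions, its conditional
`q⋆ = p⋆(y|x)` satisfies `E_p[-log q⋆] ≤ H(p⋆)` for every `p ∈ C`: on the segment
`r_t = (1-t) p⋆ + t p`, the identity `H(r_t) = (1-t) E_{p⋆}[-log r_t(Y|X)] + t E_p[-log r_t(Y|X)]`,
Gibbs' inequality for `p⋆` and maximality give `E_p[-log r_t(Y|X)] ≤ H(p⋆)`; let `t → 0`.
As the maximizer over `𝒟` itself may vanish somewhere, this is applied to `C = (1-ε) 𝒟 + ε u` with
`u` uniform, and the loss from the perturbation vanishes with `ε` because `H` is uniformly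
continuous on the compact set `[0,1] × 𝒟`.
-/

open scoped BigOperators

variable {𝒳 𝒴 : Type*}

/-- `p` is a probability distribution on `𝒳 × 𝒴`. -/
def IsDist [Fintype 𝒳] [Fintype 𝒴] (p : 𝒳 × 𝒴 → ℝ) : Prop :=
  (∀ a, 0 ≤ p a) ∧ ∑ a, p a = 1

/-- `q` is a conditional distribution (stochastic matrix) from `𝒳` to `𝒴`. -/
def IsCond [Fintype 𝒴] (q : 𝒳 → 𝒴 → ℝ) : Prop :=
  (∀ x y, 0 ≤ q x y) ∧ ∀ x, ∑ y, q x y = 1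

/-- Marginal of `X`. -/
noncomputable def margX [Fintype 𝒴] (p : 𝒳 × 𝒴 → ℝ) (x : 𝒳) : ℝ := ∑ y, p (x, y)

/-- Conditional entropy `H_p(Y|X)` (natural log, `0 log 0 = 0`). -/
noncomputable def condEnt [Fintype 𝒳] [Fintype 𝒴] (p : 𝒳 × 𝒴 → ℝ) : ℝ :=
  -∑ a, p a * Real.log (p a / margX p a.1)

/-- Expected cross-entropy loss `E_p[-log q(Y|X)]`, valued in `EReal` with value `⊤`
when `q(y|x) = 0` while `p(x,y) > 0`. -/
noncomputable def CEE [Fintype 𝒳] [Fintype 𝒴] (p : 𝒳 × 𝒴 → ℝ) (q : 𝒳 → 𝒴 → ℝ) : EReal :=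
  ∑ a, if q a.1 a.2 = 0 ∧ 0 < p a then (⊤ : EReal)
       else ((p a * (-Real.log (q a.1 a.2)) : ℝ) : EReal)

open Real Filter Topology

noncomputable def crossEnt [Fintype 𝒳] [Fintype 𝒴] (p : 𝒳 × 𝒴 → ℝ) (q : 𝒳 → 𝒴 → ℝ) : ℝ :=
  ∑ a, p a * -log (q a.1 a.2)

-- `p(y|x)`, with the junk value `0` where the marginal `margX p x` vanishes.
noncomputable def condDist [Fintype 𝒴] (p : 𝒳 × 𝒴 → ℝ) (x : 𝒳) (y : 𝒴) : ℝ :=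
  p (x, y) / margX p x

theorem EReal.coe_finsetSum {ι : Type*} (s : Finset ι) (f : ι → ℝ) :
    ((∑ i ∈ s, f i : ℝ) : EReal) = ∑ i ∈ s, (f i : EReal) :=
  map_sum (⟨⟨Real.toEReal, EReal.coe_zero⟩, EReal.coe_add⟩ : ℝ →+ EReal) f s

theorem mul_neg_log_div_sub_le {x m c : ℝ} (hx : 0 ≤ x) (hxm : x ≤ m) (hc : 0 ≤ c)
    (hxc : 0 < x → 0 < c) : x * -log (x / m) - x * -log c ≤ m * c - x := by
  rcases hx.eq_or_lt with rfl | hx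
  · simpa using mul_nonneg hxm hc
  have hm : 0 < m := hx.trans_le hxm
  have hc := hxc hx
  calc x * -log (x / m) - x * -log c = x * log (m * c / x) := by
        rw [log_div hx.ne' hm.ne', log_div (by positivity) hx.ne', log_mul hm.ne' hc.ne']; ring
    _ ≤ x * (m * c / x - 1) := by gcongr; exact log_le_sub_one_of_pos (by positivity)
    _ = m * c - x := by field_simp

section

variable [Fintype 𝒴]

theorem IsCond.le_one {q : 𝒳 → 𝒴 → ℝ} (hq : IsCond q) (x : 𝒳) (y : 𝒴) : q x y ≤ 1 :=
  hq.2 x ▸ Finset.single_le_sum (fun y _ => hq.1 x y) (Finset.mem_univ y)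

theorem IsCond.neg_log_nonneg {q : 𝒳 → 𝒴 → ℝ} (hq : IsCond q) (x : 𝒳) (y : 𝒴) :
    0 ≤ -log (q x y) :=
  neg_nonneg.2 (log_nonpos (hq.1 x y) (hq.le_one x y))

theorem le_margX {p : 𝒳 × 𝒴 → ℝ} (hp : ∀ a, 0 ≤ p a) (a : 𝒳 × 𝒴) : p a ≤ margX p a.1 :=
  Finset.single_le_sum (f := fun y => p (a.1, y)) (fun _ _ => hp _) (Finset.mem_univ a.2)

@[fun_prop]
theorem continuous_margX (x : 𝒳) : Continuous fun p : 𝒳 × 𝒴 → ℝ => margX p x := by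
  unfold margX; fun_prop

theorem margX_pos [Nonempty 𝒴] {p : 𝒳 × 𝒴 → ℝ} (hp : ∀ a, 0 < p a) (x : 𝒳) :
    0 < margX p x :=
  Finset.sum_pos (fun y _ => hp (x, y)) Finset.univ_nonempty

theorem condDist_pos {p : 𝒳 × 𝒴 → ℝ} (hp : ∀ a, 0 < p a) (x : 𝒳) (y : 𝒴) :
    0 < condDist p x y :=
  div_pos (hp _) ((hp (x, y)).trans_le (le_margX (fun a => (hp a).le) (x, y)))

theorem isCond_condDist [Nonempty 𝒴] {p : 𝒳 × 𝒴 → ℝ} (hp : ∀ a, 0 < p a) :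
    IsCond (condDist p) :=
  ⟨fun x y => (condDist_pos hp x y).le, fun x => by
    simp only [condDist, ← Finset.sum_div]; exact div_self (margX_pos hp x).ne'⟩

variable [Fintype 𝒳]

theorem IsDist.le_one {p : 𝒳 × 𝒴 → ℝ} (hp : IsDist p) (a : 𝒳 × 𝒴) : p a ≤ 1 :=
  hp.2 ▸ Finset.single_le_sum (fun a _ => hp.1 a) (Finset.mem_univ a)

theorem IsDist.nonempty {p : 𝒳 × 𝒴 → ℝ} (hp : IsDist p) : Nonempty (𝒳 × 𝒴) := by
  by_contra h
  simpa [not_nonempty_iff.mp h] using hp.2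

theorem exists_isDist_pos [Nonempty (𝒳 × 𝒴)] : ∃ u : 𝒳 × 𝒴 → ℝ, IsDist u ∧ ∀ a, 0 < u a := by
  refine ⟨fun _ => (Fintype.card (𝒳 × 𝒴) : ℝ)⁻¹, ⟨fun _ => by positivity, ?_⟩,
    fun _ => by positivity⟩
  rw [Finset.sum_const, Finset.card_univ, nsmul_eq_mul]
  exact mul_inv_cancel₀ (by positivity)

theorem isCompact_of_isDist {𝒟 : Set (𝒳 × 𝒴 → ℝ)} (hclosed : IsClosed 𝒟)
    (h𝒟 : ∀ p ∈ 𝒟, IsDist p) : IsCompact 𝒟 :=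
  (isCompact_univ_pi fun _ => isCompact_Icc).of_isClosed_subset hclosed
    fun p hp a _ => ⟨(h𝒟 p hp).1 a, (h𝒟 p hp).le_one a⟩

theorem sum_mul_margX (p : 𝒳 × 𝒴 → ℝ) (f : 𝒳 → ℝ) :
    ∑ a, p a * f a.1 = ∑ x, margX p x * f x := by
  simp only [Fintype.sum_prod_type, margX, Finset.sum_mul]

theorem condEnt_eq_sum_negMulLog_sub {p : 𝒳 × 𝒴 → ℝ} (hp : ∀ a, 0 ≤ p a) :
    condEnt p = ∑ a, negMulLog (p a) - ∑ x, negMulLog (margX p x) := by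
  have hterm : ∀ a, -(p a * log (p a / margX p a.1))
      = negMulLog (p a) + p a * log (margX p a.1) := fun a => by
    rcases (hp a).eq_or_lt with h | h
    · simp [← h]
    · rw [log_div h.ne' (h.trans_le (le_margX hp a)).ne', negMulLog]; ring
  rw [condEnt, ← Finset.sum_neg_distrib, Finset.sum_congr rfl fun a _ => hterm a,
    Finset.sum_add_distrib, sum_mul_margX p fun x => log (margX p x)]
  simp [negMulLog, sub_eq_add_neg]

theorem continuousOn_condEnt : ContinuousOn (condEnt : (𝒳 × 𝒴 → ℝ) → ℝ) {p | ∀ a, 0 ≤ p a} :=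
  (show Continuous fun p : 𝒳 × 𝒴 → ℝ => ∑ a, negMulLog (p a) - ∑ x, negMulLog (margX p x) by
    fun_prop).continuousOn.congr fun _ hp => condEnt_eq_sum_negMulLog_sub hp

theorem crossEnt_condDist_self (p : 𝒳 × 𝒴 → ℝ) : crossEnt p (condDist p) = condEnt p := by
  simp [crossEnt, condDist, condEnt]

theorem crossEnt_smul_add_smul (s t : ℝ) (p p' : 𝒳 × 𝒴 → ℝ) (q : 𝒳 → 𝒴 → ℝ) :
    crossEnt (s • p + t • p') q = s * crossEnt p q + t * crossEnt p' q := by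
  simp only [crossEnt, Pi.add_apply, Pi.smul_apply, smul_eq_mul, Finset.mul_sum,
    ← Finset.sum_add_distrib]
  exact Finset.sum_congr rfl fun _ _ => by ring

theorem crossEnt_nonneg {p : 𝒳 × 𝒴 → ℝ} {q : 𝒳 → 𝒴 → ℝ} (hp : ∀ a, 0 ≤ p a) (hq : IsCond q) :
    0 ≤ crossEnt p q :=
  Finset.sum_nonneg fun a _ => mul_nonneg (hp a) (hq.neg_log_nonneg _ _)

theorem condEnt_le_crossEnt {p : 𝒳 × 𝒴 → ℝ} {q : 𝒳 → 𝒴 → ℝ} (hp : IsDist p) (hq : IsCond q)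
    (hpq : ∀ a, 0 < p a → 0 < q a.1 a.2) : condEnt p ≤ crossEnt p q := by
  rw [← crossEnt_condDist_self, ← sub_nonpos]
  calc crossEnt p (condDist p) - crossEnt p q
      ≤ ∑ a, (margX p a.1 * q a.1 a.2 - p a) := by
        rw [crossEnt, crossEnt, ← Finset.sum_sub_distrib]
        exact Finset.sum_le_sum fun a _ =>
          mul_neg_log_div_sub_le (hp.1 a) (le_margX hp.1 a) (hq.1 _ _) (hpq a)
    _ = 0 := by
        simp [Finset.sum_sub_distrib, Fintype.sum_prod_type, ← Finset.mul_sum, hq.2, margX]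

theorem CEE_eq_coe_crossEnt {p : 𝒳 × 𝒴 → ℝ} {q : 𝒳 → 𝒴 → ℝ}
    (hpq : ∀ a, 0 < p a → q a.1 a.2 ≠ 0) : CEE p q = crossEnt p q := by
  rw [crossEnt, EReal.coe_finsetSum]
  exact Finset.sum_congr rfl fun a _ => if_neg fun h => hpq a h.2 h.1

theorem condEnt_le_CEE {p : 𝒳 × 𝒴 → ℝ} {q : 𝒳 → 𝒴 → ℝ} (hp : IsDist p) (hq : IsCond q) :
    (condEnt p : EReal) ≤ CEE p q := by
  by_cases h : ∃ a, q a.1 a.2 = 0 ∧ 0 < p a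
  · obtain ⟨a, ha⟩ := h
    have hterm : ∀ b ∈ Finset.univ, (0 : EReal) ≤ if q b.1 b.2 = 0 ∧ 0 < p b then ⊤
        else ((p b * -log (q b.1 b.2) : ℝ) : EReal) := fun b _ => by
      split_ifs
      · exact le_top
      · exact EReal.coe_nonneg.2 (mul_nonneg (hp.1 b) (hq.neg_log_nonneg _ _))
    calc (condEnt p : EReal) ≤ ⊤ := le_top
      _ = if q a.1 a.2 = 0 ∧ 0 < p a then ⊤ else ((p a * -log (q a.1 a.2) : ℝ) : EReal) :=
        (if_pos ha).symm
      _ ≤ CEE p q := Finset.single_le_sum hterm (Finset.mem_univ a)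
  · simp only [not_exists, not_and] at h
    rw [CEE_eq_coe_crossEnt fun a ha h0 => h a h0 ha]
    exact EReal.coe_le_coe_iff.2 <| condEnt_le_crossEnt hp hq fun a ha =>
      (hq.1 _ _).lt_of_ne fun h0 => h a h0.symm ha

theorem continuousAt_crossEnt_condDist (p : 𝒳 × 𝒴 → ℝ) {r : 𝒳 × 𝒴 → ℝ} (hr : ∀ a, 0 < r a) :
    ContinuousAt (fun r => crossEnt p (condDist r)) r := by
  unfold crossEnt
  refine tendsto_finsetSum _ fun a _ => continuousAt_const.mul (ContinuousAt.neg ?_)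
  have hm : margX r a.1 ≠ 0 := ((hr a).trans_le (le_margX (fun b => (hr b).le) a)).ne'
  exact ((continuous_apply a).continuousAt.div (continuous_margX a.1).continuousAt hm).log
    (condDist_pos hr a.1 a.2).ne'

theorem crossEnt_condDist_le_of_isMaxOn {C : Set (𝒳 × 𝒴 → ℝ)} (hC : Convex ℝ C)
    (hCpos : ∀ r ∈ C, IsDist r ∧ ∀ a, 0 < r a) {p₀ : 𝒳 × 𝒴 → ℝ} (hp₀ : p₀ ∈ C)
    (hmax : IsMaxOn condEnt C p₀) {p : 𝒳 × 𝒴 → ℝ} (hp : p ∈ C) :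
    crossEnt p (condDist p₀) ≤ condEnt p₀ := by
  have hseg : ∀ t ∈ Set.Ioo (0 : ℝ) 1,
      crossEnt p (condDist ((1 - t) • p₀ + t • p)) ≤ condEnt p₀ := by
    rintro t ⟨ht0, ht1⟩
    set r := (1 - t) • p₀ + t • p
    have hrC : r ∈ C := hC hp₀ hp (by linarith) ht0.le (by ring)
    obtain ⟨hr, hrpos⟩ := hCpos r hrC
    have : Nonempty 𝒴 := hr.nonempty.map Prod.snd
    have hgibbs : condEnt p₀ ≤ crossEnt p₀ (condDist r) :=
      condEnt_le_crossEnt (hCpos p₀ hp₀).1 (isCond_condDist hrpos)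
        fun a _ => condDist_pos hrpos a.1 a.2
    have hsplit : condEnt r = (1 - t) * crossEnt p₀ (condDist r) + t * crossEnt p (condDist r) := by
      rw [← crossEnt_condDist_self, crossEnt_smul_add_smul]
    have hle : condEnt r ≤ condEnt p₀ := hmax hrC
    refine le_of_mul_le_mul_left ?_ ht0
    nlinarith
  have hlim : Tendsto (fun t : ℝ => crossEnt p (condDist ((1 - t) • p₀ + t • p))) (𝓝[>] 0)
      (𝓝 (crossEnt p (condDist p₀))) :=
    ((continuousAt_crossEnt_condDist p (hCpos p₀ hp₀).2).tendsto.comp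
      ((by fun_prop : Continuous fun t : ℝ => (1 - t) • p₀ + t • p).tendsto' 0 p₀
        (by simp))).mono_left nhdsWithin_le_nhds
  exact le_of_tendsto hlim (Filter.mem_of_superset (Ioo_mem_nhdsGT one_pos) hseg)

theorem eventually_condEnt_smul_add_smul_lt {𝒟 : Set (𝒳 × 𝒴 → ℝ)} (hcomp : IsCompact 𝒟)
    (h𝒟 : ∀ p ∈ 𝒟, ∀ a, 0 ≤ p a) {u : 𝒳 × 𝒴 → ℝ} (hu : ∀ a, 0 ≤ u a) {δ : ℝ} (hδ : 0 < δ) :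
    ∀ᶠ e in 𝓝[>] (0 : ℝ), ∀ p ∈ 𝒟, condEnt ((1 - e) • p + e • u) < condEnt p + δ := by
  set g : ℝ × (𝒳 × 𝒴 → ℝ) → ℝ := fun x => condEnt ((1 - x.1) • x.2 + x.1 • u)
  have hg : ContinuousOn g (Set.Icc 0 1 ×ˢ 𝒟) :=
    continuousOn_condEnt.comp (by fun_prop) fun x hx a => by
      simp only [Pi.add_apply, Pi.smul_apply, smul_eq_mul]
      nlinarith [hx.1.1, hx.1.2, h𝒟 x.2 hx.2 a, hu a]
  obtain ⟨η, hη, hclose⟩ := Metric.uniformContinuousOn_iff.1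
    ((isCompact_Icc.prod hcomp).uniformContinuousOn_of_continuous hg) δ hδ
  filter_upwards [Ioo_mem_nhdsGT (lt_min hη one_pos)] with e he p hp
  have he1 : e < 1 := he.2.trans_le (min_le_right _ _)
  have := hclose (e, p) ⟨⟨he.1.le, he1.le⟩, hp⟩ (0, p) ⟨⟨le_rfl, zero_le_one⟩, hp⟩ (by
    simpa [Prod.dist_eq, abs_of_pos he.1] using ⟨he.2.trans_le (min_le_left _ _), hη⟩)
  simp only [g, sub_zero, one_smul, zero_smul, add_zero, Real.dist_eq] at this
  linarith [(abs_lt.1 this).2]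

variable {𝒟 : Set (𝒳 × 𝒴 → ℝ)}

theorem exists_isCond_mul_crossEnt_le (hcomp : IsCompact 𝒟) (hconv : Convex ℝ 𝒟)
    (h𝒟 : ∀ p ∈ 𝒟, IsDist p) (hne : 𝒟.Nonempty) {u : 𝒳 × 𝒴 → ℝ} (hu : IsDist u)
    (hupos : ∀ a, 0 < u a) {e : ℝ} (he : e ∈ Set.Ioo 0 1) :
    ∃ q, IsCond q ∧ (∀ x y, 0 < q x y) ∧ ∃ p' ∈ 𝒟, ∀ p ∈ 𝒟,
      (1 - e) * crossEnt p q ≤ condEnt ((1 - e) • p' + e • u) := by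
  have : Nonempty 𝒴 := hu.nonempty.map Prod.snd
  set T : (𝒳 × 𝒴 → ℝ) → (𝒳 × 𝒴 → ℝ) := fun p => (1 - e) • p + e • u
  have hT : ∀ p ∈ 𝒟, IsDist (T p) ∧ ∀ a, 0 < T p a := fun p hp => by
    have hpos : ∀ a, 0 < T p a := fun a =>
      add_pos_of_nonneg_of_pos (mul_nonneg (by linarith [he.2]) ((h𝒟 p hp).1 a))
        (mul_pos he.1 (hupos a))
    refine ⟨⟨fun a => (hpos a).le, ?_⟩, hpos⟩
    simp only [T, Pi.add_apply, Pi.smul_apply, smul_eq_mul, Finset.sum_add_distrib,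
      ← Finset.mul_sum, (h𝒟 p hp).2, hu.2]
    ring
  have hTconv : Convex ℝ (T '' 𝒟) := by
    rintro _ ⟨p, hp, rfl⟩ _ ⟨p', hp', rfl⟩ s t hs ht hst
    refine ⟨s • p + t • p', hconv hp hp' hs ht hst, funext fun a => ?_⟩
    simp only [T, Pi.add_apply, Pi.smul_apply, smul_eq_mul]
    linear_combination (-(e * u a)) * hst
  obtain ⟨_, ⟨p', hp', rfl⟩, hmax⟩ := (hcomp.image (by fun_prop)).exists_isMaxOn (hne.image T)
    (continuousOn_condEnt.mono fun _ ⟨p, hp, hpT⟩ => hpT ▸ fun a => ((hT p hp).2 a).le)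
  refine ⟨condDist (T p'), isCond_condDist (hT p' hp').2, condDist_pos (hT p' hp').2, p', hp',
    fun p hp => ?_⟩
  calc (1 - e) * crossEnt p (condDist (T p'))
      ≤ (1 - e) * crossEnt p (condDist (T p')) + e * crossEnt u (condDist (T p')) :=
        le_add_of_nonneg_right <| mul_nonneg he.1.le <|
          crossEnt_nonneg hu.1 (isCond_condDist (hT p' hp').2)
    _ = crossEnt (T p) (condDist (T p')) := (crossEnt_smul_add_smul _ _ _ _ _).symm
    _ ≤ condEnt (T p') := crossEnt_condDist_le_of_isMaxOn hTconv (by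
        rintro _ ⟨r, hr, rfl⟩; exact hT r hr) ⟨p', hp', rfl⟩ hmax ⟨p, hp, rfl⟩

theorem exists_isCond_forall_CEE_le (hcomp : IsCompact 𝒟) (hconv : Convex ℝ 𝒟)
    (h𝒟 : ∀ p ∈ 𝒟, IsDist p) (hne : 𝒟.Nonempty) {V z : ℝ} (hV : ∀ p ∈ 𝒟, condEnt p ≤ V)
    (hVz : V < z) : ∃ q, IsCond q ∧ ∀ p ∈ 𝒟, CEE p q ≤ z := by
  have := (h𝒟 _ hne.some_mem).nonempty
  obtain ⟨u, hu, hupos⟩ := exists_isDist_pos (𝒳 := 𝒳) (𝒴 := 𝒴)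
  set δ := (z - V) / 2
  have hmix := eventually_condEnt_smul_add_smul_lt hcomp (fun p hp => (h𝒟 p hp).1) hu.1
    (show 0 < δ by simp only [δ]; linarith)
  have hz : ∀ᶠ e in 𝓝[>] (0 : ℝ), V + δ < (1 - e) * z :=
    eventually_nhdsWithin_of_eventually_nhds <|
      ((by fun_prop : Continuous fun e : ℝ => (1 - e) * z).tendsto' 0 z (by simp)).eventually
        (lt_mem_nhds (by simp only [δ]; linarith))
  obtain ⟨e, hmix, hz, he⟩ := (hmix.and (hz.and (Ioo_mem_nhdsGT one_pos))).exists
  obtain ⟨q, hq, hqpos, p', hp', hle⟩ :=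
    exists_isCond_mul_crossEnt_le hcomp hconv h𝒟 hne hu hupos he
  refine ⟨q, hq, fun p hp => ?_⟩
  rw [CEE_eq_coe_crossEnt fun a _ => (hqpos a.1 a.2).ne']
  have : (1 - e) * crossEnt p q < (1 - e) * z := by linarith [hle p hp, hmix p' hp', hV p' hp']
  exact EReal.coe_le_coe_iff.2 (lt_of_mul_lt_mul_left this (by linarith [he.2])).le

end

theorem minimax_robust_learning [Fintype 𝒳] [Fintype 𝒴]
    (𝒟 : Set (𝒳 × 𝒴 → ℝ)) (h𝒟 : ∀ p ∈ 𝒟, IsDist p)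
    (hclosed : IsClosed 𝒟) (hconv : Convex ℝ 𝒟) (hne : 𝒟.Nonempty) :
    (⨅ q : {q : 𝒳 → 𝒴 → ℝ // IsCond q}, ⨆ p : 𝒟, CEE p.1 q.1)
      = (⨆ p : 𝒟, ⨅ q : {q : 𝒳 → 𝒴 → ℝ // IsCond q}, CEE p.1 q.1) ∧
    (⨅ q : {q : 𝒳 → 𝒴 → ℝ // IsCond q}, ⨆ p : 𝒟, CEE p.1 q.1)
      = ⨆ p : 𝒟, ((condEnt p.1 : ℝ) : EReal) := by
  have hent_le : (⨆ p : 𝒟, ((condEnt p.1 : ℝ) : EReal))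
      ≤ ⨆ p : 𝒟, ⨅ q : {q : 𝒳 → 𝒴 → ℝ // IsCond q}, CEE p.1 q.1 :=
    iSup_mono fun p => le_iInf fun q => condEnt_le_CEE (h𝒟 p.1 p.2) q.2
  have hweak := iSup_iInf_le_iInf_iSup fun (p : 𝒟) (q : {q : 𝒳 → 𝒴 → ℝ // IsCond q}) =>
    CEE p.1 q.1
  have hminimax : (⨅ q : {q : 𝒳 → 𝒴 → ℝ // IsCond q}, ⨆ p : 𝒟, CEE p.1 q.1)
      ≤ ⨆ p : 𝒟, ((condEnt p.1 : ℝ) : EReal) := by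
    refine EReal.le_of_forall_lt_iff_le.1 fun z hz => ?_
    obtain ⟨V, hV, hVz⟩ := EReal.lt_iff_exists_real_btwn.1 hz
    obtain ⟨q, hq, hle⟩ := exists_isCond_forall_CEE_le (isCompact_of_isDist hclosed h𝒟) hconv
      h𝒟 hne (fun p hp => EReal.coe_le_coe_iff.1 ((le_iSup _ ⟨p, hp⟩).trans hV.le))
      (EReal.coe_lt_coe_iff.1 hVz)
    exact (iInf_le _ ⟨q, hq⟩).trans (iSup_le fun p => hle p p.2)
  exact ⟨le_antisymm (hminimax.trans hent_le) hweak,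
    le_antisymm hminimax (hent_le.trans hweak)⟩
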